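/- For three unit vectors T₁, T₂, T₃ in ℝ³, the vertex contribution tc := sup_e Σℓ (π/2 − βℓ(e)) equals π/6 if and only if T₁ + T₂ + T₃ = 0. -/
import Mathlib


open Real RealInnerProductSpace

section AuxLemmas
open Real
-- Lemma R: sin A ≥ 2 sin(A/2 - π/12) for A ∈ [0, π/2]
lemma auxR (A : ℝ) (h0 : 0 ≤ A) (h2 : A ≤ π / 2) :
    2 * Real.sin (A / 2 - π / 12) ≤ Real.sin A := by
  have hpi := Real.pi_pos
  set t := A / 2 - π / 12 with ht
  have hA : A = 2 * t + π / 6 := by rw [ht]; ring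
  have ht1 : -(π / 12) ≤ t := by rw [ht]; linarith
  have ht2 : t ≤ π / 6 := by rw [ht]; linarith
  have habs : |t| ≤ π / 6 := abs_le.2 ⟨by linarith, ht2⟩
  have hcl : Real.sqrt 3 / 2 ≤ Real.cos t := by
    have h1 : Real.cos (π / 6) ≤ Real.cos |t| :=
      Real.strictAntiOn_cos.antitoneOn ⟨abs_nonneg _, by linarith⟩
        ⟨by linarith, by linarith⟩ habs
    rw [Real.cos_abs] at h1
    rwa [Real.cos_pi_div_six] at h1
  have hc1 : Real.cos t ≤ 1 := Real.cos_le_one t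
  have hu : Real.sin t ≤ 1 / 2 := by
    have h1 : Real.sin t ≤ Real.sin (π / 6) :=
      Real.strictMonoOn_sin.monotoneOn ⟨by linarith, by linarith⟩
        ⟨by linarith, by linarith⟩ ht2
    rwa [Real.sin_pi_div_six] at h1
  have hul : -(1 / 2) ≤ Real.sin t := by
    have h1 : Real.sin (-(π / 6)) ≤ Real.sin t :=
      Real.strictMonoOn_sin.monotoneOn ⟨by linarith, by linarith⟩
        ⟨by linarith, by linarith⟩ (by linarith)
    rwa [Real.sin_neg, Real.sin_pi_div_six] at h1
  have hpy := Real.sin_sq_add_cos_sq t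
  have h3 : Real.sqrt 3 ^ 2 = 3 := Real.sq_sqrt (by norm_num)
  have h3n : (0 : ℝ) ≤ Real.sqrt 3 := Real.sqrt_nonneg 3
  rw [hA, Real.sin_add, Real.sin_two_mul, Real.cos_two_mul, Real.cos_pi_div_six,
    Real.sin_pi_div_six]
  set u := Real.sin t
  set c := Real.cos t
  rcases le_or_gt 0 u with hu0 | hu0
  · nlinarith [mul_nonneg (mul_nonneg h3n hu0) (sub_nonneg.2 hcl),
      mul_nonneg (show (0:ℝ) ≤ 1 / 2 - u by linarith) (show (0:ℝ) ≤ 1 + u by linarith)]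
  · have hsc : Real.sqrt 3 * c ≤ 2 := by nlinarith
    nlinarith [mul_nonneg (show (0:ℝ) ≤ -u by linarith) (show (0:ℝ) ≤ 2 - Real.sqrt 3 * c by linarith),
      mul_nonneg (show (0:ℝ) ≤ u + 1/2 by linarith) (show (0:ℝ) ≤ 1/2 - u by linarith)]
-- Claim 2': x is the max
lemma claim2' (x y z : ℝ) (hx : |x| ≤ 1) (hy : |y| ≤ 1) (hz : |z| ≤ 1)
    (hsum : x + y + z = 0) (hyx : y ≤ x) (hzx : z ≤ x) :
    Real.arcsin x + Real.arcsin y + Real.arcsin z ≤ π / 6 := by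
  have hpi := Real.pi_pos
  obtain ⟨hx1, hx2⟩ := abs_le.mp hx
  obtain ⟨hy1, hy2⟩ := abs_le.mp hy
  obtain ⟨hz1, hz2⟩ := abs_le.mp hz
  have hx0 : 0 ≤ x := by linarith
  rcases eq_or_lt_of_le hx0 with hx0' | hx0'
  · have hy0 : y = 0 := by linarith
    have hz0 : z = 0 := by linarith
    rw [← hx0', hy0, hz0, Real.arcsin_zero]
    linarith
  set A := Real.arcsin x with hA
  set B := Real.arcsin y with hB
  set C := Real.arcsin z with hC
  have hBm := Real.arcsin_mem_Icc y
  have hCm := Real.arcsin_mem_Icc z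
  have hsBC : Real.sin B + Real.sin C = -x := by
    rw [hB, hC, Real.sin_arcsin hy1 hy2, Real.sin_arcsin hz1 hz2]; linarith
  have hid : Real.sin B + Real.sin C
      = 2 * Real.sin ((B + C) / 2) * Real.cos ((B - C) / 2) := by
    simpa [Real.sin_neg, sub_neg_eq_add, ← sub_eq_add_neg] using Real.sin_sub_sin B (-C)
  set u := (B + C) / 2 with hu
  set d := (B - C) / 2 with hd
  have hcd0 : 0 ≤ Real.cos d :=
    Real.cos_nonneg_of_mem_Icc ⟨by rw [hd]; obtain ⟨a,b⟩ := hBm; obtain ⟨c,e⟩ := hCm; linarith,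
      by rw [hd]; obtain ⟨a,b⟩ := hBm; obtain ⟨c,e⟩ := hCm; linarith⟩
  have hcd1 : Real.cos d ≤ 1 := Real.cos_le_one d
  have hprod : 2 * Real.sin u * Real.cos d = -x := by rw [← hid]; exact hsBC
  have hsu_neg : Real.sin u < 0 := by
    by_contra h
    push_neg at h
    nlinarith [mul_nonneg h hcd0]
  have hsu_le : Real.sin u ≤ -x / 2 := by
    nlinarith [mul_nonneg (show (0:ℝ) ≤ -Real.sin u by linarith) (sub_nonneg.2 hcd1)]
  have hum : u ∈ Set.Icc (-(π/2)) (π/2) := by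
    constructor
    · rw [hu]; obtain ⟨a,b⟩ := hBm; obtain ⟨c,e⟩ := hCm; linarith
    · rw [hu]; obtain ⟨a,b⟩ := hBm; obtain ⟨c,e⟩ := hCm; linarith
  have huBC : B + C ≤ -2 * Real.arcsin (x / 2) := by
    have h1 : Real.arcsin (Real.sin u) ≤ Real.arcsin (-x / 2) :=
      Real.monotone_arcsin hsu_le
    rw [Real.arcsin_sin hum.1 hum.2] at h1
    have h2 : Real.arcsin (-x / 2) = -Real.arcsin (x / 2) := by
      rw [show -x / 2 = -(x / 2) by ring, Real.arcsin_neg]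
    rw [h2] at h1
    have : u = (B + C) / 2 := hu
    linarith
  -- now bound A
  have hA0 : 0 ≤ A := Real.arcsin_nonneg.2 hx0
  have hA2 : A ≤ π / 2 := Real.arcsin_le_pi_div_two x
  have hsA : Real.sin A = x := Real.sin_arcsin hx1 hx2
  have hR := auxR A hA0 hA2
  rw [hsA] at hR
  have harg1 : -(π/2) ≤ A / 2 - π / 12 := by linarith
  have harg2 : A / 2 - π / 12 ≤ π / 2 := by linarith
  have hmono : A / 2 - π / 12 ≤ Real.arcsin (x / 2) := by
    have h1 : Real.arcsin (Real.sin (A / 2 - π / 12)) ≤ Real.arcsin (x / 2) :=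
      Real.monotone_arcsin (by linarith)
    rwa [Real.arcsin_sin harg1 harg2] at h1
  linarith

lemma claim2 (x y z : ℝ) (hx : |x| ≤ 1) (hy : |y| ≤ 1) (hz : |z| ≤ 1)
    (hsum : x + y + z = 0) :
    Real.arcsin x + Real.arcsin y + Real.arcsin z ≤ π / 6 := by
  rcases le_total y x with h1 | h1
  · rcases le_total z x with h2 | h2
    · exact claim2' x y z hx hy hz hsum h1 h2
    · have := claim2' z x y hz hx hy (by linarith) (by linarith) (by linarith)
      linarith
  · rcases le_total z y with h2 | h2
    · have := claim2' y x z hy hx hz (by linarith) h1 h2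
      linarith
    · have := claim2' z x y hz hx hy (by linarith) (by linarith) h2
      linarith
-- pivot lemma: C is a coordinate with C ≥ -π/6
lemma auxPivot (A B C : ℝ) (hA1 : -(π/2) ≤ A) (hA2 : A ≤ π/2)
    (hB1 : -(π/2) ≤ B) (hB2 : B ≤ π/2)
    (hC1 : -(π/2) ≤ C) (hC2 : C ≤ π/2)
    (hC6 : -(π/6) ≤ C) (hAC : A + C ≤ -(π/3)) (hBC : B + C ≤ -(π/3)) :
    Real.sin A + Real.sin B + Real.sin C ≤ -(3/2) := by
  have hpi := Real.pi_pos
  have hC6' : C ≤ π / 6 := by linarith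
  have hkey : ∀ X : ℝ, -(π/2) ≤ X → X + C ≤ -(π/3) →
      Real.sin X ≤ -(Real.sin (π/3 + C)) := by
    intro X h1 h2
    have h3 : Real.sin X ≤ Real.sin (-(π/3 + C)) :=
      Real.strictMonoOn_sin.monotoneOn ⟨h1, by linarith⟩
        ⟨by linarith, by linarith⟩ (by linarith)
    rwa [Real.sin_neg] at h3
  have hsA := hkey A hA1 hAC
  have hsB := hkey B hB1 hBC
  have hexp : Real.sin (π/3 + C)
      = Real.sqrt 3 / 2 * Real.cos C + 1 / 2 * Real.sin C := by
    rw [Real.sin_add, Real.sin_pi_div_three, Real.cos_pi_div_three]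
  have habs : |C| ≤ π / 6 := abs_le.2 ⟨by linarith, hC6'⟩
  have hcos : Real.sqrt 3 / 2 ≤ Real.cos C := by
    have h1 : Real.cos (π / 6) ≤ Real.cos |C| :=
      Real.strictAntiOn_cos.antitoneOn ⟨abs_nonneg _, by linarith⟩
        ⟨by linarith, by linarith⟩ habs
    rwa [Real.cos_abs, Real.cos_pi_div_six] at h1
  have h3 : Real.sqrt 3 ^ 2 = 3 := Real.sq_sqrt (by norm_num)
  have h3n : (0 : ℝ) ≤ Real.sqrt 3 := Real.sqrt_nonneg 3
  nlinarith [mul_le_mul_of_nonneg_left hcos h3n]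

lemma claim1 (A B C : ℝ) (hA1 : -(π/2) ≤ A) (hA2 : A ≤ π/2)
    (hB1 : -(π/2) ≤ B) (hB2 : B ≤ π/2)
    (hC1 : -(π/2) ≤ C) (hC2 : C ≤ π/2)
    (hAB : A + B ≤ -(π/3)) (hAC : A + C ≤ -(π/3)) (hBC : B + C ≤ -(π/3)) :
    Real.sin A + Real.sin B + Real.sin C ≤ -(3/2) := by
  have hpi := Real.pi_pos
  by_cases hA6 : -(π/6) ≤ A
  · have := auxPivot B C A hB1 hB2 hC1 hC2 hA1 hA2 hA6 (by linarith) (by linarith)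
    linarith
  by_cases hB6 : -(π/6) ≤ B
  · have := auxPivot A C B hA1 hA2 hC1 hC2 hB1 hB2 hB6 (by linarith) (by linarith)
    linarith
  by_cases hC6 : -(π/6) ≤ C
  · exact auxPivot A B C hA1 hA2 hB1 hB2 hC1 hC2 hC6 hAC hBC
  push_neg at hA6 hB6 hC6
  have hkey : ∀ X : ℝ, -(π/2) ≤ X → X < -(π/6) → Real.sin X ≤ -(1/2) := by
    intro X h1 h2
    have h3 : Real.sin X ≤ Real.sin (-(π/6)) :=
      Real.strictMonoOn_sin.monotoneOn ⟨h1, by linarith⟩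
        ⟨by linarith, by linarith⟩ (by linarith)
    rwa [Real.sin_neg, Real.sin_pi_div_six] at h3
  have := hkey A hA1 hA6
  have := hkey B hB1 hB6
  have := hkey C hC1 hC6
  linarith
end AuxLemmas

/-- The contribution to total curvature at a trivalent vertex with unit tangent
directions `T₁, T₂, T₃` in `ℝ³`. -/
noncomputable def tcVertex3 (T₁ T₂ T₃ : EuclideanSpace ℝ (Fin 3)) : ℝ :=
  sSup {s : ℝ | ∃ e : EuclideanSpace ℝ (Fin 3), ‖e‖ = 1 ∧
    s = (π / 2 - Real.arccos ⟪T₁, e⟫) + (π / 2 - Real.arccos ⟪T₂, e⟫)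
      + (π / 2 - Real.arccos ⟪T₃, e⟫)}

/-- For three unit vectors `T₁, T₂, T₃` in `ℝ³`, the vertex contribution
`tc = sup_e Σℓ (π/2 − βℓ(e))` equals `π/6` if and only if the vectors are
balanced: `T₁ + T₂ + T₃ = 0`. -/
theorem tcVertex3_eq_pi_div_six_iff_balanced
    (T₁ T₂ T₃ : EuclideanSpace ℝ (Fin 3))
    (h₁ : ‖T₁‖ = 1) (h₂ : ‖T₂‖ = 1) (h₃ : ‖T₃‖ = 1) :
    tcVertex3 T₁ T₂ T₃ = π / 6 ↔ T₁ + T₂ + T₃ = 0 := by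
  have hpi := Real.pi_pos
  set P := {s : ℝ | ∃ e : EuclideanSpace ℝ (Fin 3), ‖e‖ = 1 ∧
    s = (π / 2 - Real.arccos ⟪T₁, e⟫) + (π / 2 - Real.arccos ⟪T₂, e⟫)
      + (π / 2 - Real.arccos ⟪T₃, e⟫)} with hP
  have htc : tcVertex3 T₁ T₂ T₃ = sSup P := rfl
  have hform : ∀ e : EuclideanSpace ℝ (Fin 3),
      (π / 2 - Real.arccos ⟪T₁, e⟫) + (π / 2 - Real.arccos ⟪T₂, e⟫)
      + (π / 2 - Real.arccos ⟪T₃, e⟫)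
      = Real.arcsin ⟪T₁, e⟫ + Real.arcsin ⟪T₂, e⟫ + Real.arcsin ⟪T₃, e⟫ := by
    intro e
    rw [Real.arcsin_eq_pi_div_two_sub_arccos, Real.arcsin_eq_pi_div_two_sub_arccos,
      Real.arcsin_eq_pi_div_two_sub_arccos]
  have hcs : ∀ u v : EuclideanSpace ℝ (Fin 3), ‖u‖ = 1 → ‖v‖ = 1 → |⟪u, v⟫| ≤ 1 := by
    intro u v hu hv
    have := abs_real_inner_le_norm u v
    rwa [hu, hv, mul_one] at this
  have hbdd : BddAbove P := by
    refine ⟨3 * (π / 2), ?_⟩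
    rintro s ⟨e, he, rfl⟩
    have a1 := Real.arccos_nonneg ⟪T₁, e⟫
    have a2 := Real.arccos_nonneg ⟪T₂, e⟫
    have a3 := Real.arccos_nonneg ⟪T₃, e⟫
    linarith
  have hself : ∀ u : EuclideanSpace ℝ (Fin 3), ‖u‖ = 1 → ⟪u, u⟫ = (1:ℝ) := by
    intro u hu
    rw [real_inner_self_eq_norm_sq, hu]; norm_num
  constructor
  · -- forward
    intro h
    have hmem : ∀ u : EuclideanSpace ℝ (Fin 3), ‖u‖ = 1 →
        Real.arcsin ⟪T₁, u⟫ + Real.arcsin ⟪T₂, u⟫ + Real.arcsin ⟪T₃, u⟫ ≤ π / 6 := by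
      intro u hu
      have : (π / 2 - Real.arccos ⟪T₁, u⟫) + (π / 2 - Real.arccos ⟪T₂, u⟫)
          + (π / 2 - Real.arccos ⟪T₃, u⟫) ∈ P := ⟨u, hu, rfl⟩
      have h2 := le_csSup hbdd this
      rw [← htc, h] at h2
      rwa [hform u] at h2
    have harcsin1 : Real.arcsin (1:ℝ) = π / 2 := Real.arcsin_one
    have e1 := hmem T₁ h₁
    rw [hself T₁ h₁, harcsin1, real_inner_comm T₁ T₂, real_inner_comm T₁ T₃] at e1
    have e2 := hmem T₂ h₂
    rw [hself T₂ h₂, harcsin1, real_inner_comm T₂ T₃] at e2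
    have e3 := hmem T₃ h₃
    rw [hself T₃ h₃, harcsin1] at e3
    set a := (⟪T₁, T₂⟫ : ℝ) with ha
    set b := (⟪T₁, T₃⟫ : ℝ) with hb
    set c := (⟪T₂, T₃⟫ : ℝ) with hc
    have hab : |a| ≤ 1 := hcs T₁ T₂ h₁ h₂
    have hbb : |b| ≤ 1 := hcs T₁ T₃ h₁ h₃
    have hcb : |c| ≤ 1 := hcs T₂ T₃ h₂ h₃
    obtain ⟨ha1, ha2⟩ := abs_le.mp hab
    obtain ⟨hb1, hb2⟩ := abs_le.mp hbb
    obtain ⟨hc1, hc2⟩ := abs_le.mp hcb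
    have hsum := claim1 (Real.arcsin a) (Real.arcsin b) (Real.arcsin c)
      (Real.neg_pi_div_two_le_arcsin a) (Real.arcsin_le_pi_div_two a)
      (Real.neg_pi_div_two_le_arcsin b) (Real.arcsin_le_pi_div_two b)
      (Real.neg_pi_div_two_le_arcsin c) (Real.arcsin_le_pi_div_two c)
      (by linarith) (by linarith) (by linarith)
    rw [Real.sin_arcsin ha1 ha2, Real.sin_arcsin hb1 hb2, Real.sin_arcsin hc1 hc2] at hsum
    have hexp : ⟪T₁ + T₂ + T₃, T₁ + T₂ + T₃⟫ =
        (3 : ℝ) + 2 * a + 2 * b + 2 * c := by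
      simp only [inner_add_left, inner_add_right]
      rw [hself T₁ h₁, hself T₂ h₂, hself T₃ h₃, real_inner_comm T₁ T₂,
        real_inner_comm T₁ T₃, real_inner_comm T₂ T₃, ← ha, ← hb, ← hc]
      ring
    have : ⟪T₁ + T₂ + T₃, T₁ + T₂ + T₃⟫ ≤ (0:ℝ) := by rw [hexp]; linarith
    exact real_inner_self_nonpos.mp this
  · -- backward
    intro hbal
    have hinner : ∀ u : EuclideanSpace ℝ (Fin 3),
        ⟪T₁, u⟫ + ⟪T₂, u⟫ + ⟪T₃, u⟫ = (0:ℝ) := by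
      intro u
      have : ⟪T₁ + T₂ + T₃, u⟫ = (0:ℝ) := by rw [hbal, inner_zero_left]
      rwa [inner_add_left, inner_add_left] at this
    -- pairwise inner products are -1/2
    have g1 := hinner T₁
    rw [real_inner_comm T₁ T₂, real_inner_comm T₁ T₃, hself T₁ h₁] at g1
    have g2 := hinner T₂
    rw [real_inner_comm T₂ T₃, hself T₂ h₂] at g2
    have g3 := hinner T₃
    rw [hself T₃ h₃] at g3
    have ha : ⟪T₁, T₂⟫ = (-(1/2) : ℝ) := by linarith
    have hb : ⟪T₁, T₃⟫ = (-(1/2) : ℝ) := by linarith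
    have harcsin_half : Real.arcsin (1/2 : ℝ) = π / 6 := by
      rw [← Real.sin_pi_div_six]
      exact Real.arcsin_sin (by linarith) (by linarith)
    have hmem : (π / 6 : ℝ) ∈ P := by
      refine ⟨T₁, h₁, ?_⟩
      rw [hform T₁, hself T₁ h₁, real_inner_comm T₁ T₂, real_inner_comm T₁ T₃, ha, hb,
        Real.arcsin_one, show (-(1/2) : ℝ) = -(1/2) by norm_num, Real.arcsin_neg,
        harcsin_half]
      ring
    have hub : ∀ s ∈ P, s ≤ π / 6 := by
      rintro s ⟨e, he, rfl⟩
      rw [hform e]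
      exact claim2 _ _ _ (hcs T₁ e h₁ he) (hcs T₂ e h₂ he) (hcs T₃ e h₃ he) (hinner e)
    rw [htc]
    exact le_antisymm (csSup_le ⟨π/6, hmem⟩ hub) (le_csSup ⟨π/6, fun s hs => hub s hs⟩ hmem)
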